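/- arXiv:2406.16378 — 3 statements merged into one kernel-verified Lean document; each statement's English description precedes it below -/
import Mathlib

section
/- Let E be a real uniformly convex Banach space and let a, b be real numbers with 0 < a < b < 1. Let (t_n) be a sequence of real numbers with t_n ∈ [a, b] for all n, and let (w_n), (y_n) be sequences in E with ‖w_n‖ ≤ 1 and ‖y_n‖ ≤ 1 for all n. Define z_n := (1 − t_n) • w_n + t_n • y_n. If lim_{n→∞} ‖z_n‖ = 1, then lim_{n→∞} ‖w_n − y_n‖ = 0. -/
/-!
Uniform convexity gives `δ > 0` with `‖w + y‖ ≤ 2 - δ` whenever `‖w - y‖ ≥ ε`. Writing the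
convex combination as `(1 - 2t) • w + t • (w + y)` (for `t ≤ 1/2`, symmetrically otherwise)
shows that its norm is then at most `1 - min t (1 - t) * δ`, and `min t (1 - t) ≥ min a (1 - b)`
keeps this bounded away from `1`, contradicting `‖zₙ‖ → 1`.
-/

open Filter Set

section NormedSpace

variable {E : Type*} [NormedAddCommGroup E] [NormedSpace ℝ E]

lemma norm_one_sub_smul_add_smul_le_of_le_half {x y : E} {t δ : ℝ} (hx : ‖x‖ ≤ 1)
    (hxy : ‖x + y‖ ≤ 2 - δ) (ht₀ : 0 ≤ t) (ht : t ≤ 1 / 2) :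
    ‖(1 - t) • x + t • y‖ ≤ 1 - t * δ := by
  have hsplit : (1 - t) • x + t • y = (1 - 2 * t) • x + t • (x + y) := by module
  calc ‖(1 - t) • x + t • y‖ ≤ (1 - 2 * t) * ‖x‖ + t * ‖x + y‖ := by
        rw [hsplit]
        refine (norm_add_le _ _).trans_eq ?_
        rw [norm_smul, norm_smul, Real.norm_of_nonneg (by linarith), Real.norm_of_nonneg ht₀]
    _ ≤ (1 - 2 * t) * 1 + t * (2 - δ) := by gcongr; linarith
    _ = 1 - t * δ := by ring

lemma norm_one_sub_smul_add_smul_le {x y : E} {t δ : ℝ} (hx : ‖x‖ ≤ 1) (hy : ‖y‖ ≤ 1)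
    (hxy : ‖x + y‖ ≤ 2 - δ) (ht : t ∈ Icc (0 : ℝ) 1) :
    ‖(1 - t) • x + t • y‖ ≤ 1 - min t (1 - t) * δ := by
  obtain ⟨ht₀, ht₁⟩ := ht
  rcases le_total t (1 / 2) with hle | hge
  · rw [min_eq_left (by linarith)]
    exact norm_one_sub_smul_add_smul_le_of_le_half hx hxy ht₀ hle
  · rw [min_eq_right (by linarith)]
    have hyx : ‖y + x‖ ≤ 2 - δ := by rwa [add_comm]
    have h := norm_one_sub_smul_add_smul_le_of_le_half hy hyx (sub_nonneg.2 ht₁) (by linarith)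
    rwa [sub_sub_cancel, add_comm] at h

end NormedSpace

lemma exists_forall_norm_one_sub_smul_add_smul_le_one_sub {E : Type*} [NormedAddCommGroup E]
    [NormedSpace ℝ E] [UniformConvexSpace E] {ε c : ℝ} (hε : 0 < ε) (hc : 0 < c) :
    ∃ η > 0, ∀ ⦃x y : E⦄, ‖x‖ ≤ 1 → ‖y‖ ≤ 1 → ε ≤ ‖x - y‖ → ∀ t ∈ Icc c (1 - c),
      ‖(1 - t) • x + t • y‖ ≤ 1 - η := by
  obtain ⟨δ, hδ, hconvex⟩ := exists_forall_closed_ball_dist_add_le_two_sub E hε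
  refine ⟨c * δ, mul_pos hc hδ, fun x y hx hy hxy t ⟨htc, htc'⟩ => ?_⟩
  have hmin : c ≤ min t (1 - t) := le_min htc (by linarith)
  calc ‖(1 - t) • x + t • y‖ ≤ 1 - min t (1 - t) * δ :=
        norm_one_sub_smul_add_smul_le hx hy (hconvex hx hy hxy) ⟨by linarith, by linarith⟩
    _ ≤ 1 - c * δ := by gcongr

theorem dotson_lemma_general {E : Type*} [NormedAddCommGroup E] [NormedSpace ℝ E]
    [UniformConvexSpace E]
    (a b : ℝ) (ha : 0 < a) (hb : b < 1)
    (t : ℕ → ℝ) (ht : ∀ n, t n ∈ Set.Icc a b)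
    (w y : ℕ → E) (hw : ∀ n, ‖w n‖ ≤ 1) (hy : ∀ n, ‖y n‖ ≤ 1)
    (z : ℕ → E) (hz : ∀ n, z n = (1 - t n) • w n + t n • y n)
    (hlim : Filter.Tendsto (fun n => ‖z n‖) Filter.atTop (nhds 1)) :
    Filter.Tendsto (fun n => ‖w n - y n‖) Filter.atTop (nhds 0) := by
  rw [Metric.tendsto_nhds]
  intro ε hε
  obtain ⟨η, hη, hbound⟩ := exists_forall_norm_one_sub_smul_add_smul_le_one_sub (E := E) hε
    (lt_min ha (sub_pos.2 hb))
  filter_upwards [hlim.eventually (lt_mem_nhds (sub_lt_self 1 hη))] with n hzn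
  rw [Real.dist_0_eq_abs, abs_norm]
  by_contra! hfar
  have htn : t n ∈ Icc (min a (1 - b)) (1 - min a (1 - b)) :=
    ⟨min_le_left _ _ |>.trans (ht n).1, by linarith [min_le_right a (1 - b), (ht n).2]⟩
  have := hbound (hw n) (hy n) hfar (t n) htn
  rw [← hz n] at this
  linarith

/-- Dotson's Lemma 3: in a real uniformly convex Banach space, if `‖wₙ‖ ≤ 1`,
`‖yₙ‖ ≤ 1`, `tₙ ∈ [a, b] ⊂ (0, 1)` and `‖(1 - tₙ) • wₙ + tₙ • yₙ‖ → 1`,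
then `‖wₙ - yₙ‖ → 0`. -/
theorem dotson_lemma {E : Type*} [NormedAddCommGroup E] [NormedSpace ℝ E]
    [CompleteSpace E] [UniformConvexSpace E]
    (a b : ℝ) (ha : 0 < a) (hab : a < b) (hb : b < 1)
    (t : ℕ → ℝ) (ht : ∀ n, t n ∈ Set.Icc a b)
    (w y : ℕ → E) (hw : ∀ n, ‖w n‖ ≤ 1) (hy : ∀ n, ‖y n‖ ≤ 1)
    (z : ℕ → E) (hz : ∀ n, z n = (1 - t n) • w n + t n • y n)
    (hlim : Filter.Tendsto (fun n => ‖z n‖) Filter.atTop (nhds 1)) :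
    Filter.Tendsto (fun n => ‖w n - y n‖) Filter.atTop (nhds 0) :=
  dotson_lemma_general a b ha hb t ht w y hw hy z hz hlim
end

section
/- There exist a sequence (t_n) of real numbers with t_n ∈ (0, 1) for all n, sequences (a_n), (b_n) of real numbers, and m ≥ 0, such that limsup_{n→∞} |a_n| ≤ m, limsup_{n→∞} |b_n| ≤ m, lim_{n→∞} |(1 − t_n) a_n + t_n b_n| = m, and yet |a_n − b_n| does not tend to 0 as n → ∞. (Since ℝ with the absolute value is a uniformly convex Banach space, the variant of Schu's lemma stated with coefficients only in (0,1) is false.) -/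
/-! With `t n → 0` the coefficients leave every compact subinterval of `(0, 1)`, so the
convex combination `(1 - t n) • a + t n • b` approaches `a` and its norm tends to `‖a‖`
whatever `b` is. Taking `a = 1`, `b = -1` in `ℝ` keeps `|a - b| = 2`. -/

open Filter Topology

lemma one_div_add_two_mem_Ioo (n : ℕ) : 1 / ((n : ℝ) + 2) ∈ Set.Ioo (0 : ℝ) 1 :=
  ⟨by positivity, (div_lt_one (by positivity)).2 (by linarith [n.cast_nonneg (α := ℝ)])⟩

lemma tendsto_one_div_add_two_atTop_nhds_zero :
    Tendsto (fun n : ℕ => 1 / ((n : ℝ) + 2)) atTop (𝓝 0) :=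
  tendsto_const_nhds.div_atTop (tendsto_natCast_atTop_atTop.atTop_add tendsto_const_nhds)

lemma tendsto_abs_convexComb_of_tendsto_zero {t : ℕ → ℝ} (ht : Tendsto t atTop (𝓝 0))
    (x y : ℝ) : Tendsto (fun n => |(1 - t n) * x + t n * y|) atTop (𝓝 |x|) := by
  have h : Tendsto (fun n => (1 - t n) * x + t n * y) atTop (𝓝 ((1 - 0) * x + 0 * y)) :=
    ((tendsto_const_nhds.sub ht).mul_const x).add (ht.mul_const y)
  simpa using h.abs

/-- The variant of Schu's lemma with coefficients only in `(0, 1)` fails even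
in `ℝ`. -/
theorem counterexample_open_coeffs :
    ∃ (t a b : ℕ → ℝ) (m : ℝ), 0 ≤ m ∧ (∀ n, t n ∈ Set.Ioo (0 : ℝ) 1) ∧
      Filter.limsup (fun n => |a n|) Filter.atTop ≤ m ∧
      Filter.limsup (fun n => |b n|) Filter.atTop ≤ m ∧
      Filter.Tendsto (fun n => |(1 - t n) * a n + t n * b n|)
        Filter.atTop (nhds m) ∧
      ¬ Filter.Tendsto (fun n => |a n - b n|) Filter.atTop (nhds 0) := by
  refine ⟨fun n => 1 / ((n : ℝ) + 2), fun _ => 1, fun _ => -1, 1, zero_le_one,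
    one_div_add_two_mem_Ioo, by simp, by simp, ?_, ?_⟩
  · simpa using tendsto_abs_convexComb_of_tendsto_zero
      tendsto_one_div_add_two_atTop_nhds_zero 1 (-1)
  · norm_num [tendsto_const_nhds_iff]
end

section
/- Let X be a real normed vector space and x ∈ X with ‖x‖ = 1, and let λ ∈ (0, 1). Define x_n := x for all n ≥ 1, y_n := 0 for even n and y_n := x for odd n, and t_n := λ for all n. Then limsup_{n→∞} ‖x_n‖ = 1, limsup_{n→∞} ‖y_n‖ = 1, limsup_{n→∞} ‖t_n • x_n + (1 − t_n) • y_n‖ = 1, and the sequence (‖x_n − y_n‖) does not converge to 0. -/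
open Filter

theorem Filter.limsup_eq_of_eventually_le_of_frequently_eq {ι α : Type*}
    [ConditionallyCompleteLinearOrder α] {l : Filter ι} {u : ι → α} {a : α}
    (hle : ∀ᶠ i in l, u i ≤ a) (hfreq : ∃ᶠ i in l, u i = a) : limsup u l = a :=
  le_antisymm
    (limsup_le_of_le (.of_frequently_ge (hfreq.mono fun _ h => h.ge)) hle)
    (le_limsup_of_frequently_le (hfreq.mono fun _ h => h.ge) (isBoundedUnder_of_eventually_le hle))

theorem norm_smul_add_one_sub_smul_le_one {E : Type*} [SeminormedAddCommGroup E]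
    [NormedSpace ℝ E] {a : ℝ} (ha₀ : 0 ≤ a) (ha₁ : a ≤ 1) {x y : E} (hx : ‖x‖ ≤ 1)
    (hy : ‖y‖ ≤ 1) : ‖a • x + (1 - a) • y‖ ≤ 1 := by
  simpa using (convex_closedBall (0 : E) 1) (by simpa using hx) (by simpa using hy) ha₀
    (sub_nonneg.2 ha₁) (add_sub_cancel a 1)

/-- Example 2 of the paper: replacing `lim` by `limsup` in the third
hypothesis of Schu's lemma gives a false statement. -/
theorem example_two {X : Type*} [NormedAddCommGroup X] [NormedSpace ℝ X]
    (x : X) (hx : ‖x‖ = 1) (l : ℝ) (hl : l ∈ Set.Ioo (0 : ℝ) 1)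
    (xs ys : ℕ → X) (t : ℕ → ℝ)
    (hxs : ∀ n, xs n = x)
    (hys : ∀ n, ys n = if Even n then 0 else x)
    (ht : ∀ n, t n = l) :
    Filter.limsup (fun n => ‖xs n‖) Filter.atTop = 1 ∧
    Filter.limsup (fun n => ‖ys n‖) Filter.atTop = 1 ∧
    Filter.limsup (fun n => ‖t n • xs n + (1 - t n) • ys n‖) Filter.atTop = 1 ∧
    ¬ Filter.Tendsto (fun n => ‖xs n - ys n‖) Filter.atTop (nhds 0) := by
  have hodd : ∃ᶠ n in atTop, Odd n :=
    frequently_atTop.2 fun a => ⟨2 * a + 1, by omega, odd_two_mul_add_one a⟩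
  have heven : ∃ᶠ n in atTop, Even n :=
    frequently_atTop.2 fun a => ⟨2 * a, by omega, even_two_mul a⟩
  have hys_odd (n : ℕ) (hn : Odd n) : ys n = x := by
    rw [hys, if_neg (Nat.not_even_iff_odd.2 hn)]
  have hys_le (n : ℕ) : ‖ys n‖ ≤ 1 := by
    rw [hys]; split_ifs <;> simp [hx]
  refine ⟨by simp [hxs, hx], ?_, ?_, ?_⟩
  · exact limsup_eq_of_eventually_le_of_frequently_eq (.of_forall hys_le)
      (hodd.mono fun n hn => by rw [hys_odd n hn, hx])
  · refine limsup_eq_of_eventually_le_of_frequently_eq (.of_forall fun n => ?_)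
      (hodd.mono fun n hn => ?_)
    · rw [hxs, ht]
      exact norm_smul_add_one_sub_smul_le_one hl.1.le hl.2.le hx.le (hys_le n)
    · rw [hxs, hys_odd n hn, ht, ← add_smul, add_sub_cancel, one_smul, hx]
  · intro h
    obtain ⟨n, hn, hlt⟩ := (heven.and_eventually (h.eventually (gt_mem_nhds one_pos))).exists
    rw [hxs, hys, if_pos hn, sub_zero, hx] at hlt
    exact lt_irrefl _ hlt
end
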